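/- arXiv:math/0110203 — 3 statements merged into one kernel-verified Lean document; each statement's English description precedes it below -/
import Mathlib

section
/- For all sufficiently large n, the number g_n of unlabeled graphs on n vertices satisfies 2^{binom(n,2)}/n! ≤ g_n ≤ (2^{binom(n,2)}/n!)·(1 + 4n^4/2^n); consequently g_n ~ 2^{binom(n,2)}/n! as n → ∞. -/
open scoped Classical Filter Topology

/-- Isomorphism of labeled graphs on `n` vertices, as a setoid. -/
def graphIsoSetoid (n : ℕ) : Setoid (SimpleGraph (Fin n)) where
  r G G' := Nonempty (G ≃g G')
  iseqv := ⟨fun _ => ⟨SimpleGraph.Iso.refl⟩, fun ⟨e⟩ => ⟨e.symm⟩, fun ⟨e⟩ ⟨f⟩ => ⟨e.trans f⟩⟩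

/-- The number of unlabeled graphs on `n` nodes. -/
noncomputable def gcount (n : ℕ) : ℕ := Nat.card (Quotient (graphIsoSetoid n))

/-!
Burnside's lemma gives `g_n · n! = ∑_σ |Fix σ|`, the sum running over the permutations `σ` of the
vertices acting on labelled graphs. The identity contributes `2^C` with `C = n.choose 2`, which is
the lower bound. A graph fixed by `σ` is a union of orbits of `⟨σ⟩` on the `C` vertex pairs, so
`|Fix σ| ≤ 2^Ω` for the number `Ω` of these orbits. If `σ` moves `m ≥ 2` vertices it fixes at most
`(n - m).choose 2 + m / 2` pairs, and since an orbit is either a fixed pair or has at least two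
elements, `4Ω ≤ 4C - m(2n - m - 2)`. Once `n^4 ≤ 2^(n-4)` this gives
`|Fix σ| ≤ 2^C / (2^(n-2) n^(m-2))`, and as at most `n^m` permutations move exactly `m` vertices,
the non-identity terms add up to at most `2^C · 4n²(n + 1) / 2^n ≤ 2^C · 4n⁴ / 2^n`.
-/

open Finset MulAction Equiv Nat Filter

theorem MulAction.mem_fixedPoints_zpowers_iff {G α : Type*} [Group G] [MulAction G α]
    {g : G} {a : α} : a ∈ fixedPoints (Subgroup.zpowers g) α ↔ g • a = a :=
  ⟨fun h => h ⟨g, Subgroup.mem_zpowers g⟩, fun h ⟨_, j, hj⟩ => hj ▸ mem_fixedBy_zpow h j⟩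

section OrbitCounting

variable {H X : Type*} [Group H] [MulAction H X] [Finite X]

theorem MulAction.two_mul_card_orbits_le_card_add_card_fixedPoints :
    2 * Nat.card (orbitRel.Quotient H X) ≤ Nat.card X + Nat.card (fixedPoints H X) := by
  have := Fintype.ofFinite X
  let π : X → orbitRel.Quotient H X := Quotient.mk _
  let F := (fixedPoints H X).toFinset
  have hfiber (x : X) : 2 ≤ #{y | π y = π x} + #{y ∈ F | π y = π x} := by
    by_cases hx : x ∈ fixedPoints H X
    · have h1 : 0 < #{y | π y = π x} := card_pos.2 ⟨x, mem_filter.2 ⟨mem_univ _, rfl⟩⟩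
      have h2 : 0 < #{y ∈ F | π y = π x} :=
        card_pos.2 ⟨x, mem_filter.2 ⟨Set.mem_toFinset.2 hx, rfl⟩⟩
      omega
    · obtain ⟨h, hh⟩ : ∃ h : H, h • x ≠ x := by simpa [mem_fixedPoints] using hx
      have hsub : {h • x, x} ⊆ ({y | π y = π x} : Finset X) := by
        intro y hy
        rcases mem_insert.1 hy with rfl | hy
        · exact mem_filter.2 ⟨mem_univ _, Quotient.sound (mem_orbit x h)⟩
        · simp [mem_singleton.1 hy]
      have := card_le_card hsub
      rw [card_pair hh] at this
      omega
  calc 2 * Nat.card (orbitRel.Quotient H X) = ∑ _q : orbitRel.Quotient H X, 2 := by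
        simp [mul_comm]
    _ ≤ ∑ q, (#{x | π x = q} + #{x ∈ F | π x = q}) :=
        sum_le_sum fun q _ => by obtain ⟨x, rfl⟩ := Quotient.mk_surjective q; exact hfiber x
    _ = Nat.card X + Nat.card (fixedPoints H X) := by
        rw [sum_add_distrib, ← card_eq_sum_card_fiberwise (fun _ _ => mem_univ _),
          ← card_eq_sum_card_fiberwise (fun _ _ => mem_univ _), Finset.card_univ,
          Nat.card_eq_fintype_card, Nat.card_eq_card_toFinset]

theorem MulAction.card_invariant_fun_eq (β : Type*) :
    Nat.card {f : X → β // ∀ (h : H) x, f (h • x) = f x} =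
      Nat.card β ^ Nat.card (orbitRel.Quotient H X) := by
  rw [← Nat.card_fun]
  exact Nat.card_congr
    { toFun f := Quotient.lift f.1 fun _ _ ⟨h, hx⟩ => hx ▸ f.2 h _
      invFun g := ⟨g ∘ Quotient.mk _, fun h x => congrArg g (Quotient.sound (mem_orbit x h))⟩
      left_inv _ := rfl
      right_inv g := funext fun q => Quotient.inductionOn q fun _ => rfl }

end OrbitCounting

namespace Equiv.Perm

variable {α : Type*} [Fintype α] [DecidableEq α]

theorem card_filter_support_eq_le (S : Finset α) : #{σ : Perm α | σ.support = S} ≤ (#S)! := by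
  calc #{σ : Perm α | σ.support = S} ≤ #{σ : Perm α | ∀ a, a ∉ S → σ a = a} :=
        card_le_card fun σ hσ => by
          simp only [mem_filter, mem_univ, true_and] at hσ ⊢
          intro a ha
          rwa [← hσ, mem_support, not_not] at ha
    _ = (#S)! := by
        rw [← Fintype.card_subtype, ← Fintype.card_congr (Perm.subtypeEquivSubtypePerm (· ∈ S)),
          Fintype.card_perm, Fintype.card_coe]

theorem card_filter_card_support_eq_le (m : ℕ) :
    #{σ : Perm α | #σ.support = m} ≤ Fintype.card α ^ m :=
  calc #{σ : Perm α | #σ.support = m}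
      = ∑ S ∈ powersetCard m univ, #{σ ∈ {σ : Perm α | #σ.support = m} | σ.support = S} :=
        card_eq_sum_card_fiberwise fun σ hσ =>
          mem_powersetCard.2 ⟨subset_univ _, (mem_filter.1 hσ).2⟩
    _ ≤ ∑ S ∈ powersetCard m univ, m ! := sum_le_sum fun S hS => by
        rw [← (mem_powersetCard.1 hS).2]
        exact (card_le_card (filter_subset_filter _ (filter_subset _ _))).trans
          (card_filter_support_eq_le S)
    _ = (Fintype.card α).descFactorial m := by
        rw [sum_const, card_powersetCard, Finset.card_univ, smul_eq_mul,
          descFactorial_eq_factorial_mul_choose, mul_comm]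
    _ ≤ Fintype.card α ^ m := descFactorial_le_pow _ _

theorem sum_inv_pow_card_support_le {K : Type*} [Field K] [LinearOrder K] [IsStrictOrderedRing K] :
    ∑ σ : Perm α, ((Fintype.card α : K) ^ #σ.support)⁻¹ ≤ Fintype.card α + 1 := by
  set n := Fintype.card α
  calc ∑ σ : Perm α, ((n : K) ^ #σ.support)⁻¹
      = ∑ m ∈ range (n + 1), ∑ σ ∈ {σ : Perm α | #σ.support = m}, ((n : K) ^ #σ.support)⁻¹ :=
        (sum_fiberwise_of_maps_to (g := fun σ : Perm α => #σ.support)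
          (fun σ _ => mem_range.2 (Nat.lt_succ_of_le (card_le_univ _))) _).symm
    _ = ∑ m ∈ range (n + 1), (#{σ : Perm α | #σ.support = m} : K) / n ^ m :=
        sum_congr rfl fun m _ => by
          rw [sum_congr rfl fun σ hσ => by rw [(mem_filter.1 hσ).2], sum_const, nsmul_eq_mul,
            div_eq_mul_inv]
    _ ≤ ∑ m ∈ range (n + 1), 1 := sum_le_sum fun m _ =>
        div_le_one_of_le₀ (by exact_mod_cast card_filter_card_support_eq_le m) (by positivity)
    _ = n + 1 := by simp

end Equiv.Perm

theorem Sym2.eq_mk_of_map_perm_eq {V : Type*} {σ : Perm V} {e : Sym2 V} (he : e.map σ = e) {a : V}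
    (ha : a ∈ e) (hσa : σ a ≠ a) : e = s(a, σ a) := by
  obtain ⟨b, rfl⟩ := Sym2.mem_iff_exists.1 ha
  rw [Sym2.map_mk, Sym2.eq_iff] at he
  rcases he with ⟨h, -⟩ | ⟨h, -⟩
  · exact absurd h hσa
  · rw [h]

namespace SimpleGraph

variable {V : Type*}

instance : MulAction (Perm V) (SimpleGraph V) where
  smul σ G := σ.simpleGraph G
  one_smul _ := rfl
  mul_smul _ _ _ := rfl

theorem perm_smul_adj (σ : Perm V) (G : SimpleGraph V) (a b : V) :
    (σ • G).Adj a b ↔ G.Adj (σ.symm a) (σ.symm b) := Iff.rfl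

theorem nonempty_iso_iff_mem_orbit {G G' : SimpleGraph V} :
    Nonempty (G ≃g G') ↔ G ∈ orbit (Perm V) G' := by
  constructor
  · rintro ⟨e⟩
    refine ⟨e.toEquiv.symm, ?_⟩
    ext a b
    simpa [perm_smul_adj] using e.map_adj_iff
  · rintro ⟨σ, rfl⟩
    exact ⟨Iso.comap σ.symm G'⟩

instance : MulAction (Perm V) {e : Sym2 V // ¬e.IsDiag} where
  smul σ e := ⟨e.1.map σ, (Sym2.isDiag_map σ.injective).not.2 e.2⟩
  one_smul e := Subtype.ext (congrFun Sym2.map_id e.1)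
  mul_smul σ τ e := Subtype.ext (Sym2.map_map (g := σ) (f := τ) e.1).symm

theorem perm_smul_val (σ : Perm V) (e : {e : Sym2 V // ¬e.IsDiag}) : (σ • e).1 = e.1.map σ :=
  rfl

theorem perm_smul_mem_edgeSet_perm_smul (σ : Perm V) (G : SimpleGraph V)
    (e : {e : Sym2 V // ¬e.IsDiag}) : (σ • e).1 ∈ (σ • G).edgeSet ↔ e.1 ∈ G.edgeSet := by
  obtain ⟨e, he⟩ := e
  induction e using Sym2.ind
  simp [perm_smul_val, perm_smul_adj]

def edgeSetEquiv : SimpleGraph V ≃ Set {e : Sym2 V // ¬e.IsDiag} where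
  toFun G := {e | e.1 ∈ G.edgeSet}
  invFun S := fromEdgeSet (Subtype.val '' S)
  left_inv G := by
    ext a b
    simp only [fromEdgeSet_adj, Set.mem_image, Set.mem_ofPred_eq, Subtype.exists,
      exists_and_right, exists_eq_right]
    exact ⟨fun ⟨⟨_, h⟩, _⟩ => h, fun h => ⟨⟨by simpa using h.ne, h⟩, h.ne⟩⟩
  right_inv S := by
    ext ⟨e, he⟩
    simp [he]

theorem card_fixedBy_le_two_pow_card_orbits [Finite V] (σ : Perm V) :
    Nat.card (fixedBy (SimpleGraph V) σ) ≤
      2 ^ Nat.card (orbitRel.Quotient (Subgroup.zpowers σ) {e : Sym2 V // ¬e.IsDiag}) := by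
  let edges (G : fixedBy (SimpleGraph V) σ) :
      {f : {e : Sym2 V // ¬e.IsDiag} → Prop // ∀ (h : Subgroup.zpowers σ) e, f (h • e) = f e} :=
    ⟨fun e => e.1 ∈ G.1.edgeSet, fun h e => by
      have hG : (h : Perm V) • G.1 = G.1 :=
        mem_stabilizer_iff.1 (Subgroup.zpowers_le.2 (mem_stabilizer_iff.2 G.2) h.2)
      conv_lhs => rw [Subgroup.smul_def, ← hG]
      exact propext (perm_smul_mem_edgeSet_perm_smul _ _ e)⟩
  calc Nat.card (fixedBy (SimpleGraph V) σ) ≤ Nat.card {f : {e : Sym2 V // ¬e.IsDiag} → Prop //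
        ∀ (h : Subgroup.zpowers σ) e, f (h • e) = f e} :=
        Nat.card_le_card_of_injective edges fun G G' h =>
          Subtype.ext (edgeSetEquiv.injective (congrArg Subtype.val h))
    _ = _ := by rw [card_invariant_fun_eq, Nat.card_eq_fintype_card (α := Prop), Fintype.card_prop]

variable [Fintype V] [DecidableEq V]

theorem natCard_eq_two_pow_choose : Nat.card (SimpleGraph V) = 2 ^ (Fintype.card V).choose 2 := by
  rw [Nat.card_congr edgeSetEquiv, Nat.card_eq_fintype_card, Fintype.card_set,
    Sym2.card_subtype_not_diag]

theorem card_filter_forall_mem_le (S : Finset V) :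
    #{e : {e : Sym2 V // ¬e.IsDiag} | ∀ a ∈ e.1, a ∈ S} ≤ (#S).choose 2 := by
  rw [← Sym2.card_image_offDiag]
  refine card_le_card_of_injOn (fun e => e.1) ?_ fun e _ e' _ h => Subtype.ext h
  rintro ⟨e, hne⟩ he
  induction e using Sym2.ind with | _ a b => ?_
  have hab : ∀ x ∈ s(a, b), x ∈ S := (mem_filter.1 he).2
  exact mem_image.2 ⟨(a, b), mem_offDiag.2 ⟨hab a (Sym2.mem_mk_left a b),
    hab b (Sym2.mem_mk_right a b), fun h => hne (Sym2.mk_isDiag_iff.2 h)⟩, rfl⟩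

theorem two_mul_card_fixedPoints_zpowers_le (σ : Perm V) :
    2 * Nat.card (fixedPoints (Subgroup.zpowers σ) {e : Sym2 V // ¬e.IsDiag}) ≤
      2 * (Fintype.card V - #σ.support).choose 2 + #σ.support := by
  let F : Finset {e : Sym2 V // ¬e.IsDiag} := {e | σ • e = e}
  let A := F.filter fun e => ∀ a ∈ e.1, σ a = a
  let B := F.filter fun e => ¬∀ a ∈ e.1, σ a = a
  have hF : Nat.card (fixedPoints (Subgroup.zpowers σ) {e : Sym2 V // ¬e.IsDiag}) = #A + #B := by
    rw [card_filter_add_card_filter_not, Nat.card_eq_card_toFinset]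
    congr 1
    ext e
    simp only [F, mem_filter, mem_univ, true_and, Set.mem_toFinset, mem_fixedPoints_zpowers_iff]
  have hA : #A ≤ (Fintype.card V - #σ.support).choose 2 := by
    rw [← card_compl]
    refine (card_le_card fun e he => ?_).trans (card_filter_forall_mem_le σ.supportᶜ)
    simpa using (mem_filter.1 he).2
  -- a swapped edge `s(a, σ a)` contains two moved points, and a moved point `a` lies only in it
  have hmap : ∀ e ∈ B, e.1.map σ = e.1 := fun e he =>
    congrArg Subtype.val (mem_filter.1 (mem_filter.1 he).1).2
  have hB : #B * 2 ≤ #σ.support * 1 := by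
    refine card_mul_le_card_mul (fun e a => a ∈ e.1) (fun e he => ?_) fun a ha => ?_
    · obtain ⟨a, ha, hσa⟩ := not_forall₂.1 (mem_filter.1 he).2
      have he : e.1 = s(a, σ a) := Sym2.eq_mk_of_map_perm_eq (hmap e he) ha hσa
      calc 2 = #{a, σ a} := (card_pair (Ne.symm hσa)).symm
        _ ≤ _ := card_le_card fun x hx => by
          rcases mem_insert.1 hx with rfl | hx
          · simp [he, hσa]
          · simp [mem_singleton.1 hx, he, hσa]
    · refine card_le_one.2 fun e he e' he' => ?_
      rw [mem_bipartiteBelow] at he he'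
      have hpair (e) (he : e ∈ B) (hae : a ∈ e.1) : e.1 = s(a, σ a) :=
        Sym2.eq_mk_of_map_perm_eq (hmap e he) hae (Perm.mem_support.1 ha)
      exact Subtype.ext ((hpair e he.1 he.2).trans (hpair e' he'.1 he'.2).symm)
  rw [hF]
  omega

theorem card_fixedBy_mul_two_pow_mul_pow_le {σ : Perm V} (hσ : σ ≠ 1) (hn : 4 ≤ Fintype.card V)
    (hpow : Fintype.card V ^ 4 ≤ 2 ^ (Fintype.card V - 4)) :
    Nat.card (fixedBy (SimpleGraph V) σ) * 2 ^ (Fintype.card V - 2) *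
      Fintype.card V ^ (#σ.support - 2) ≤ 2 ^ (Fintype.card V).choose 2 := by
  have h1 := two_mul_card_orbits_le_card_add_card_fixedPoints
    (H := Subgroup.zpowers σ) (X := {e : Sym2 V // ¬e.IsDiag})
  rw [Nat.card_eq_fintype_card (α := {e : Sym2 V // ¬e.IsDiag}), Sym2.card_subtype_not_diag] at h1
  have h2 := two_mul_card_fixedPoints_zpowers_le σ
  have hm2 := Perm.two_le_card_support_of_ne_one hσ
  have hmn : #σ.support ≤ Fintype.card V := card_le_univ _
  set n := Fintype.card V
  set m := #σ.support
  set Ω := Nat.card (orbitRel.Quotient (Subgroup.zpowers σ) {e : Sym2 V // ¬e.IsDiag})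
  have hΩ : 4 * Ω ≤ 2 * n.choose 2 + 2 * (n - m).choose 2 + m := by omega
  -- `4 (C - Ω) ≥ m (2n - m - 2) = 4 (n - 2) + (n - 4)(m - 2) + (n - m)(m - 2)`
  have hexp : 4 * Ω + 4 * (n - 2) + (n - 4) * (m - 2) ≤ 4 * n.choose 2 := by
    have hC := Nat.cast_choose_two ℚ n
    have hD := Nat.cast_choose_two ℚ (n - m)
    qify [hn, hm2, hmn, hn.trans' (by norm_num : 2 ≤ 4)] at hΩ hD ⊢
    nlinarith [mul_nonneg (sub_nonneg.2 (show (m : ℚ) ≤ n by exact_mod_cast hmn))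
      (sub_nonneg.2 (show (2 : ℚ) ≤ m by exact_mod_cast hm2))]
  -- fourth powers keep the exponent `(n - 4)(m - 2) / 4` integral
  rw [← Nat.pow_le_pow_iff_left four_ne_zero]
  calc (Nat.card (fixedBy (SimpleGraph V) σ) * 2 ^ (n - 2) * n ^ (m - 2)) ^ 4
      = Nat.card (fixedBy (SimpleGraph V) σ) ^ 4 * 2 ^ (4 * (n - 2)) * (n ^ 4) ^ (m - 2) := by ring
    _ ≤ (2 ^ Ω) ^ 4 * 2 ^ (4 * (n - 2)) * (2 ^ (n - 4)) ^ (m - 2) := by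
        gcongr
        exact card_fixedBy_le_two_pow_card_orbits σ
    _ = 2 ^ (4 * Ω + 4 * (n - 2) + (n - 4) * (m - 2)) := by ring
    _ ≤ 2 ^ (4 * n.choose 2) := Nat.pow_le_pow_right two_pos hexp
    _ = (2 ^ n.choose 2) ^ 4 := by ring

theorem card_orbits_mul_factorial_eq :
    Nat.card (orbitRel.Quotient (Perm V) (SimpleGraph V)) * (Fintype.card V)! =
      2 ^ (Fintype.card V).choose 2 +
        ∑ σ ∈ univ.erase (1 : Perm V), Nat.card (fixedBy (SimpleGraph V) σ) := by
  have hburnside := sum_card_fixedBy_eq_card_orbits_mul_card_group (Perm V) (SimpleGraph V)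
  simp only [← Nat.card_eq_fintype_card, Nat.card_perm] at hburnside
  rw [Nat.card_eq_fintype_card (α := V)] at hburnside
  rw [← hburnside, ← add_sum_erase _ _ (mem_univ 1), fixedBy_one_eq_univ, Nat.card_univ,
    natCard_eq_two_pow_choose]

theorem sum_card_fixedBy_ne_one_le {K : Type*} [Field K] [LinearOrder K] [IsStrictOrderedRing K]
    (hn : 4 ≤ Fintype.card V) (hpow : Fintype.card V ^ 4 ≤ 2 ^ (Fintype.card V - 4)) :
    ∑ σ ∈ univ.erase (1 : Perm V), (Nat.card (fixedBy (SimpleGraph V) σ) : K) ≤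
      2 ^ (Fintype.card V).choose 2 * (4 * Fintype.card V ^ 4 / 2 ^ Fintype.card V) := by
  set n := Fintype.card V
  have hn0 : (0 : K) < n := by norm_cast; omega
  have hper (σ) (hσ : σ ∈ univ.erase (1 : Perm V)) : (Nat.card (fixedBy (SimpleGraph V) σ) : K) ≤
      2 ^ n.choose 2 * (4 * n ^ 2 / 2 ^ n) * ((n : K) ^ #σ.support)⁻¹ := by
    have h := card_fixedBy_mul_two_pow_mul_pow_le (ne_of_mem_erase hσ) hn hpow
    have hm2 := Perm.two_le_card_support_of_ne_one (ne_of_mem_erase hσ)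
    rw [← pow_sub_mul_pow (2 : K) (hn.trans' (by norm_num) : 2 ≤ n),
      ← pow_sub_mul_pow (n : K) hm2]
    field_simp
    have hK : (Nat.card (fixedBy (SimpleGraph V) σ) : K) * 2 ^ (n - 2) * n ^ (#σ.support - 2) ≤
        2 ^ n.choose 2 := by exact_mod_cast h
    linarith
  calc ∑ σ ∈ univ.erase (1 : Perm V), (Nat.card (fixedBy (SimpleGraph V) σ) : K)
      ≤ ∑ σ ∈ univ.erase (1 : Perm V),
          2 ^ n.choose 2 * (4 * n ^ 2 / 2 ^ n) * ((n : K) ^ #σ.support)⁻¹ := sum_le_sum hper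
    _ ≤ 2 ^ n.choose 2 * (4 * n ^ 2 / 2 ^ n) * ∑ σ : Perm V, ((n : K) ^ #σ.support)⁻¹ := by
        rw [← mul_sum]
        gcongr
        exact erase_subset _ _
    _ ≤ 2 ^ n.choose 2 * (4 * n ^ 2 / 2 ^ n) * (n + 1) := by
        gcongr
        exact Perm.sum_inv_pow_card_support_le
    _ ≤ 2 ^ n.choose 2 * (4 * n ^ 4 / 2 ^ n) := by
        rw [mul_assoc, div_mul_eq_mul_div]
        gcongr 2 ^ n.choose 2 * (?_ / _)
        have : (4 : K) ≤ n := by exact_mod_cast hn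
        calc 4 * (n : K) ^ 2 * (n + 1) ≤ 4 * n ^ 2 * n ^ 2 := by gcongr; nlinarith
          _ = 4 * (n : K) ^ 4 := by ring

end SimpleGraph

theorem graphIsoSetoid_eq_orbitRel (n : ℕ) :
    graphIsoSetoid n = orbitRel (Perm (Fin n)) (SimpleGraph (Fin n)) :=
  Setoid.ext fun _ _ => SimpleGraph.nonempty_iso_iff_mem_orbit

theorem gcount_eq_card_orbits (n : ℕ) :
    gcount n = Nat.card (orbitRel.Quotient (Perm (Fin n)) (SimpleGraph (Fin n))) := by
  rw [gcount, graphIsoSetoid_eq_orbitRel]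

theorem eventually_pow_four_le_two_pow_sub_four : ∀ᶠ n : ℕ in atTop, n ^ 4 ≤ 2 ^ (n - 4) := by
  have h := (tendsto_pow_const_div_const_pow_of_one_lt 4 one_lt_two).eventually
    (gt_mem_nhds (by norm_num : (0 : ℝ) < 1 / 16))
  filter_upwards [h, eventually_ge_atTop 4] with n hn h4
  rw [div_lt_iff₀ (by positivity), ← pow_sub_mul_pow (2 : ℝ) h4] at hn
  exact_mod_cast (by linarith : (n : ℝ) ^ 4 ≤ 2 ^ (n - 4))

theorem eventually_gcount_bounds (K : Type*) [Field K] [LinearOrder K] [IsStrictOrderedRing K] :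
    ∀ᶠ n : ℕ in atTop,
      (2 : K) ^ n.choose 2 / (n ! : K) ≤ (gcount n : K) ∧
      (gcount n : K) ≤ (2 : K) ^ n.choose 2 / (n ! : K) * (1 + 4 * (n : K) ^ 4 / 2 ^ n) := by
  filter_upwards [eventually_pow_four_le_two_pow_sub_four, eventually_ge_atTop 4] with n hpow hn
  have hcount := SimpleGraph.card_orbits_mul_factorial_eq (V := Fin n)
  have hsum := SimpleGraph.sum_card_fixedBy_ne_one_le (K := K) (V := Fin n)
  simp only [Fintype.card_fin, ← gcount_eq_card_orbits] at hcount hsum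
  have hcountK : (gcount n : K) * n ! = 2 ^ n.choose 2 + ∑ σ ∈ univ.erase (1 : Perm (Fin n)),
      (Nat.card (fixedBy (SimpleGraph (Fin n)) σ) : K) := by exact_mod_cast hcount
  have hf : (0 : K) < n ! := by positivity
  constructor
  · rw [div_le_iff₀ hf, hcountK]
    exact le_add_of_nonneg_right (sum_nonneg fun _ _ => by positivity)
  · rw [div_mul_eq_mul_div, le_div_iff₀ hf, hcountK]
    linarith [hsum hn hpow]

/-- For all sufficiently large `n`, the number `g_n` of unlabeled graphs on `n` vertices
satisfies `2^{binom(n,2)}/n! ≤ g_n ≤ (2^{binom(n,2)}/n!)(1 + 4n⁴/2ⁿ)`; consequently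
`g_n ~ 2^{binom(n,2)}/n!` as `n → ∞`. -/
theorem unlabeled_graph_count_asymptotics :
    (∃ N : ℕ, ∀ n ≥ N,
      (2 : ℚ) ^ n.choose 2 / (Nat.factorial n : ℚ) ≤ (gcount n : ℚ) ∧
      (gcount n : ℚ) ≤ (2 : ℚ) ^ n.choose 2 / (Nat.factorial n : ℚ)
          * (1 + 4 * (n : ℚ) ^ 4 / 2 ^ n)) ∧
    Filter.Tendsto
      (fun n : ℕ => (gcount n : ℝ) / ((2 : ℝ) ^ n.choose 2 / (Nat.factorial n : ℝ)))
      Filter.atTop (𝓝 1) := by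
  refine ⟨eventually_atTop.1 (eventually_gcount_bounds ℚ), ?_⟩
  have hlim : Tendsto (fun n : ℕ => 1 + 4 * (n : ℝ) ^ 4 / 2 ^ n) atTop (𝓝 1) := by
    simpa [mul_div_assoc] using
      ((tendsto_pow_const_div_const_pow_of_one_lt 4 one_lt_two).const_mul 4).const_add 1
  refine tendsto_of_tendsto_of_tendsto_of_le_of_le' tendsto_const_nhds hlim ?_ ?_ <;>
    filter_upwards [eventually_gcount_bounds ℝ] with n hn
  · exact (one_le_div (by positivity)).2 hn.1
  · exact (div_le_iff₀ (by positivity)).2 (by rw [mul_comm]; exact hn.2)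
end

section
/- (Baranyai-type partition) Let k divide n. The binom(n,k) k-element subsets of an n-element set can be partitioned into binom(n,k)/(n/k) families, each family being a partition of the n-element set into n/k pairwise disjoint k-element subsets; in particular each k-subset belongs to exactly one such family. -/
/-!
Baranyai's argument builds the partitions one point at a time. Keep `h = C(n-1, k-1)` partial
partitions of a growing set `M`, each into at most `N = n / k` parts of size at most `k`, such that
every `A ⊆ M` with `#A ≤ k` occurs in exactly `C(n - #M, k - #A)` of them, where each partial
partition is padded with empty parts up to `N` parts. To add a point `x`, every partial partition
chooses one of its (possibly empty) parts to receive `x`; the invariant survives exactly when each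
`A` is chosen `C(n - #M - 1, k - 1 - #A)` times. Letting `A` carry the weight
`1 / C(n - #M, k - #A)` in every partition where it occurs gives a doubly stochastic
assignment, so by Birkhoff's theorem an integral one exists. For `M = V` the invariant says that
every `k`-set lies in exactly one of the partitions.
-/

open Finset

section DoublyStochastic

variable {R : Type*} [Field R] [LinearOrder R] [IsStrictOrderedRing R]

theorem exists_perm_forall_pos_of_mem_doublyStochastic {n : Type*} [Fintype n]
    [DecidableEq n] {M : Matrix n n R} (hM : M ∈ doublyStochastic R n) :
    ∃ σ : Equiv.Perm n, ∀ i, 0 < M i (σ i) := by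
  obtain ⟨w, hw0, hw1, hwM⟩ := exists_eq_sum_perm_of_mem_doublyStochastic hM
  obtain ⟨σ, -, hσ⟩ := exists_ne_zero_of_sum_ne_zero (hw1.trans_ne one_ne_zero)
  have hperm : ∀ τ : Equiv.Perm n, ∀ i j, 0 ≤ τ.permMatrix R i j := fun τ i j => by
    simp [Equiv.toPEquiv_apply]; split_ifs <;> norm_num
  refine ⟨σ, fun i => ?_⟩
  calc 0 < w σ := (hw0 σ).lt_of_ne' hσ
    _ = w σ * σ.permMatrix R i (σ i) := by simp [Equiv.toPEquiv_apply]
    _ ≤ ∑ τ, w τ * τ.permMatrix R i (σ i) :=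
        single_le_sum (f := fun τ => w τ * τ.permMatrix R i (σ i))
          (fun τ _ => mul_nonneg (hw0 τ) (hperm τ _ _)) (mem_univ σ)
    _ = M i (σ i) := by rw [← hwM]; simp [Matrix.sum_apply]

theorem exists_equiv_forall_pos_of_sum_eq_one {κ ι : Type*} [Fintype κ] [Fintype ι]
    (w : κ → ι → R) (hw : ∀ x i, 0 ≤ w x i)
    (hrow : ∀ x, ∑ i, w x i = 1) (hcol : ∀ i, ∑ x, w x i = 1) :
    ∃ e : κ ≃ ι, ∀ x, 0 < w x (e x) := by
  classical
  have hcard : Fintype.card κ = Fintype.card ι := by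
    have : (Fintype.card κ : R) = Fintype.card ι :=
      calc (Fintype.card κ : R) = ∑ x, ∑ i, w x i := by simp [hrow]
        _ = ∑ i, ∑ x, w x i := sum_comm
        _ = Fintype.card ι := by simp [hcol]
    exact_mod_cast this
  let e₀ : ι ≃ κ := Fintype.equivOfCardEq hcard.symm
  have hM : Matrix.of (fun j i => w (e₀ j) i) ∈ doublyStochastic R ι := by
    refine mem_doublyStochastic_iff_sum.2 ⟨fun j i => hw _ _, fun j => hrow _, fun i => ?_⟩
    simpa using (Equiv.sum_comp e₀ (fun x => w x i)).trans (hcol i)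
  obtain ⟨σ, hσ⟩ := exists_perm_forall_pos_of_mem_doublyStochastic hM
  exact ⟨e₀.symm.trans σ, fun x => by simpa using hσ (e₀.symm x)⟩

/-- A fractional assignment of the elements of `ι` to targets `a ∈ s`, in which every target
receives total weight `d a`, can be made integral. -/
theorem exists_fiber_card_eq_of_sum_eq_one {α ι : Type*} [Fintype ι] [DecidableEq α]
    (s : Finset α) (d : α → ℕ) (w : α → ι → R) (hw : ∀ a i, 0 ≤ w a i)
    (hrow : ∀ a ∈ s, 0 < d a → ∑ i, w a i = 1) (hcol : ∀ i, ∑ a ∈ s, d a * w a i = 1) :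
    ∃ σ : ι → α, (∀ i, σ i ∈ s ∧ 0 < w (σ i) i) ∧ ∀ a ∈ s, #{i | σ i = a} = d a := by
  -- split each target `a` into `d a` copies, each carrying the weights `w a`
  obtain ⟨e, he⟩ := exists_equiv_forall_pos_of_sum_eq_one
    (κ := Σ a : s, Fin (d a)) (fun x i => w x.1 i) (fun x i => hw _ _)
    (fun x => hrow _ x.1.2 (Fin.pos x.2))
    (fun i => by
      simpa [Fintype.sum_sigma, sum_attach s (fun a => (d a : R) * w a i)] using hcol i)
  refine ⟨fun i => (e.symm i).1, fun i => ⟨(e.symm i).1.2, by simpa using he (e.symm i)⟩,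
    fun a ha => ?_⟩
  calc #{i | ((e.symm i).1 : α) = a} = #{x : Σ a : s, Fin (d a) | (x.1 : α) = a} :=
        card_equiv e.symm (by simp)
    _ = d a := by
        rw [card_filter, Fintype.sum_sigma]
        simp only [sum_boole, Nat.cast_id]
        rw [Fintype.sum_eq_single ⟨a, ha⟩ fun b hb => by simp [Subtype.ext_iff.not.mp hb]]
        simp

end DoublyStochastic

namespace Finpartition

variable {V : Type*} [DecidableEq V] {M : Finset V}

/-- `x` joins the part `A` of `P`, or forms a new singleton part when `A = ∅`. -/
def insertInto (P : Finpartition M) {x : V} (hx : x ∉ M) {A : Finset V}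
    (hA : A = ∅ ∨ A ∈ P.parts) : Finpartition (insert x M) where
  parts := insert (insert x A) (P.parts.erase A)
  supIndep := by
    rw [supIndep_iff_pairwiseDisjoint, coe_insert]
    refine (P.disjoint.subset (by simp)).insert fun C hC hne => ?_
    obtain ⟨hCA, hCP⟩ := mem_erase.1 hC
    refine disjoint_insert_left.2 ⟨fun hxC => hx (P.subset hCP hxC), ?_⟩
    rcases hA with rfl | hA
    · exact disjoint_empty_left C
    · exact P.disjoint hA hCP (Ne.symm hCA)
  sup_parts := by
    have hM : A ∪ (P.parts.erase A).sup id = M := by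
      rcases hA with rfl | hA
      · rw [erase_eq_of_notMem P.empty_notMem_parts, P.sup_parts, empty_union]
      · conv_rhs => rw [← P.sup_parts, ← insert_erase hA, sup_insert]
        rfl
    rw [sup_insert, id, sup_eq_union, insert_union, hM]
  bot_notMem h := by
    rcases mem_insert.1 h with h | h
    · exact insert_ne_empty x A h.symm
    · exact P.empty_notMem_parts (mem_of_mem_erase h)

theorem card_parts_insertInto (P : Finpartition M) {x : V} (hx : x ∉ M) {A : Finset V}
    (hA : A = ∅ ∨ A ∈ P.parts) :
    #(P.insertInto hx hA).parts = #P.parts + if A = ∅ then 1 else 0 := by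
  have hnew : insert x A ∉ P.parts.erase A := fun h =>
    hx (P.subset (mem_of_mem_erase h) (mem_insert_self x A))
  rw [insertInto, card_insert_of_notMem hnew]
  rcases hA with rfl | hA
  · rw [erase_eq_of_notMem P.empty_notMem_parts, if_pos rfl]
  · rw [card_erase_of_mem hA, if_neg (P.nonempty_of_mem_parts hA).ne_empty]
    have := card_pos.2 ⟨A, hA⟩
    omega

/-- The multiplicity of `A` in `P` padded with empty parts up to `N` parts. -/
def paddedCount (N : ℕ) (P : Finpartition M) (A : Finset V) : ℕ :=
  (if A ∈ P.parts then 1 else 0) + if A = ∅ then N - #P.parts else 0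

theorem eq_empty_or_mem_parts_of_paddedCount_pos {N : ℕ} {P : Finpartition M} {A : Finset V}
    (h : 0 < P.paddedCount N A) : A = ∅ ∨ A ∈ P.parts := by
  unfold paddedCount at h
  split_ifs at h <;> simp_all

theorem paddedCount_insertInto (N : ℕ) (P : Finpartition M) {x : V} (hx : x ∉ M)
    {A : Finset V} (hA : A = ∅ ∨ A ∈ P.parts) (B : Finset V) :
    (P.insertInto hx hA).paddedCount N B =
      if x ∈ B then (if A = B.erase x then 1 else 0)
      else P.paddedCount N B - if A = B then 1 else 0 := by
  have hxA : x ∉ A := by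
    rcases hA with rfl | hA
    · exact notMem_empty x
    · exact fun h => hx (P.subset hA h)
  simp only [paddedCount, card_parts_insertInto]
  by_cases hxB : x ∈ B
  · have hB : B = insert x A ↔ A = B.erase x := by
      constructor
      · rintro rfl; rw [erase_insert hxA]
      · rintro rfl; rw [insert_erase hxB]
    have hBP : B ∉ P.parts := fun h => hx (P.subset h hxB)
    simp [insertInto, hxB, hB, hBP, ne_empty_of_mem hxB]
  · have hB : B ≠ insert x A := fun h => hxB (h ▸ mem_insert_self x A)
    simp only [insertInto, mem_insert, hB, mem_erase, false_or, if_neg hxB]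
    rcases hA with rfl | hA
    · by_cases hB0 : B = ∅
      · simp [hB0, P.empty_notMem_parts]; omega
      · simp [hB0, Ne.symm hB0]
    · have hA0 := (P.nonempty_of_mem_parts hA).ne_empty
      by_cases hBA : A = B
      · subst hBA; simp [hA, hA0]
      · simp [hBA, Ne.symm hBA, hA0]

theorem sum_paddedCount_mul_sub_card {k N : ℕ} (P : Finpartition M)
    (hk : ∀ A ∈ P.parts, #A ≤ k) (hN : #P.parts ≤ N) :
    ∑ A ∈ M.powerset, P.paddedCount N A * (k - #A) = k * N - #M := by
  have hparts : ∑ A ∈ P.parts, (k - #A) + #M = k * #P.parts := by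
    rw [← P.sum_card_parts, ← sum_add_distrib,
      sum_congr rfl fun A hA => Nat.sub_add_cancel (hk A hA), sum_const, smul_eq_mul, mul_comm]
  have hsub : P.parts ⊆ M.powerset := fun A hA => mem_powerset.2 (P.subset hA)
  simp only [paddedCount, add_mul, sum_add_distrib, ite_mul, one_mul, zero_mul, sum_ite_mem,
    inter_eq_right.2 hsub, sum_ite_eq', empty_mem_powerset, if_true, card_empty, Nat.sub_zero]
  have := Nat.mul_le_mul_left k hN
  rw [Nat.sub_mul, mul_comm N k, mul_comm #P.parts k]
  omega

end Finpartition

theorem Nat.choose_pred_mul_eq {c q : ℕ} (hq : 0 < q) :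
    (c - 1).choose (q - 1) * c = c.choose q * q := by
  obtain ⟨q, rfl⟩ := Nat.exists_eq_add_one.2 hq
  rcases c with _ | c
  · simp
  · simpa [mul_comm] using Nat.add_one_mul_choose_eq c q

theorem Nat.div_dvd_choose {n k : ℕ} (hk0 : 0 < k) (hk : k ∣ n) : n / k ∣ n.choose k := by
  obtain ⟨N, rfl⟩ := hk
  rw [Nat.mul_div_cancel_left N hk0]
  refine ⟨(k * N - 1).choose (k - 1), Nat.eq_of_mul_eq_mul_right hk0 ?_⟩
  rw [← Nat.choose_pred_mul_eq hk0]
  ring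

section Baranyai

open Finpartition

variable {V ι : Type*} [DecidableEq V] [Fintype ι] {n k N : ℕ} {M : Finset V}

structure IsBaranyaiFamily (n k N : ℕ) (P : ι → Finpartition M) : Prop where
  card_parts_le (i : ι) : #(P i).parts ≤ N
  card_le_of_mem_parts (i : ι) : ∀ A ∈ (P i).parts, #A ≤ k
  sum_paddedCount (A : Finset V) : A ⊆ M → #A ≤ k →
    ∑ i, (P i).paddedCount N A = (n - #M).choose (k - #A)

/-- The share of `P` among the `choose (n - #M) (k - #A)` occurrences of `A` in a family
satisfying `IsBaranyaiFamily n k N`. -/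
def Finpartition.paddedShare (n k N : ℕ) (P : Finpartition M) (A : Finset V) : ℚ :=
  P.paddedCount N A / (n - #M).choose (k - #A)

theorem isBaranyaiFamily_empty (h : Fintype.card ι * N = n.choose k) :
    IsBaranyaiFamily n k N fun _ : ι => (Finpartition.empty (Finset V) : Finpartition ∅) where
  card_parts_le _ := by simp
  card_le_of_mem_parts _ := by simp
  sum_paddedCount A hA _ := by
    obtain rfl := subset_empty.1 hA
    simp [paddedCount, h]

variable {P : ι → Finpartition M}

theorem IsBaranyaiFamily.paddedCount_le (hP : IsBaranyaiFamily n k N P) {A : Finset V}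
    (hA : A ⊆ M) (hAk : #A ≤ k) (i : ι) :
    (P i).paddedCount N A ≤ (n - #M).choose (k - #A) :=
  hP.sum_paddedCount A hA hAk ▸ single_le_sum (f := fun j => (P j).paddedCount N A)
    (fun _ _ => Nat.zero_le _) (mem_univ i)

theorem IsBaranyaiFamily.sum_paddedShare (hP : IsBaranyaiFamily n k N P) {A : Finset V}
    (hA : A ⊆ M) (hAk : #A ≤ k) (hC : (n - #M).choose (k - #A) ≠ 0) :
    ∑ i, (P i).paddedShare n k N A = 1 := by
  simp only [paddedShare]
  rw [← sum_div, ← Nat.cast_sum, hP.sum_paddedCount A hA hAk, div_self (by exact_mod_cast hC)]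

theorem IsBaranyaiFamily.sum_choose_mul_paddedShare (hP : IsBaranyaiFamily n k N P)
    (hn : n = k * N) (hM : #M < n) (i : ι) :
    ∑ A ∈ {A ∈ M.powerset | #A < k},
      ((n - #M - 1).choose (k - 1 - #A) : ℚ) * (P i).paddedShare n k N A = 1 := by
  have hc0 : ((n - #M : ℕ) : ℚ) ≠ 0 := by exact_mod_cast (Nat.sub_pos_of_lt hM).ne'
  -- `C(c - 1, q - 1) / C(c, q) = q / c`, and the padded parts of `P i` have total
  -- deficiency `∑ (k - #A) = k * N - #M = c`
  have hterm : ∀ A ∈ {A ∈ M.powerset | #A < k},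
      ((n - #M - 1).choose (k - 1 - #A) : ℚ) * (P i).paddedShare n k N A =
        ((P i).paddedCount N A * (k - #A) : ℕ) / (n - #M : ℕ) := by
    intro A hA
    obtain ⟨hAM, hAk⟩ : A ⊆ M ∧ #A < k := by simpa using hA
    rcases Nat.eq_zero_or_pos ((P i).paddedCount N A) with h0 | hpos
    · simp [paddedShare, h0]
    have hC : ((n - #M).choose (k - #A) : ℚ) ≠ 0 := by
      exact_mod_cast (hpos.trans_le (hP.paddedCount_le hAM hAk.le i)).ne'
    have hd : ((n - #M - 1).choose (k - 1 - #A) : ℚ) * (n - #M : ℕ) =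
        (n - #M).choose (k - #A) * (k - #A : ℕ) := by
      have := Nat.choose_pred_mul_eq (c := n - #M) (q := k - #A) (by omega)
      rw [show k - #A - 1 = k - 1 - #A by omega] at this
      exact_mod_cast this
    simp only [paddedShare]
    field_simp
    push_cast
    linear_combination ((P i).paddedCount N A : ℚ) * hd
  have hsupport : ∀ A ∈ M.powerset, (P i).paddedCount N A * (k - #A) ≠ 0 → #A < k := by
    intro A _ h
    have := Nat.pos_of_ne_zero (right_ne_zero_of_mul h)
    omega
  rw [sum_congr rfl hterm, ← sum_div, ← Nat.cast_sum, sum_filter_of_ne hsupport,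
    sum_paddedCount_mul_sub_card (P i) (hP.card_le_of_mem_parts i) (hP.card_parts_le i), ← hn,
    div_self hc0]

theorem IsBaranyaiFamily.exists_targets (hP : IsBaranyaiFamily n k N P) (hn : n = k * N)
    (hM : #M < n) :
    ∃ σ : ι → Finset V,
      (∀ i, σ i ∈ {A ∈ M.powerset | #A < k} ∧ 0 < (P i).paddedCount N (σ i)) ∧
      ∀ A ∈ {A ∈ M.powerset | #A < k}, #{i | σ i = A} = (n - #M - 1).choose (k - 1 - #A) := by
  have hrow : ∀ A ∈ {A ∈ M.powerset | #A < k}, 0 < (n - #M - 1).choose (k - 1 - #A) →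
      ∑ i, (P i).paddedShare n k N A = 1 := by
    intro A hA hd
    obtain ⟨hAM, hAk⟩ : A ⊆ M ∧ #A < k := by simpa using hA
    refine hP.sum_paddedShare hAM hAk.le fun hC => ?_
    rw [Nat.choose_eq_zero_iff] at hC
    rw [Nat.choose_eq_zero_of_lt (by omega)] at hd
    exact hd.false
  obtain ⟨σ, hσ, hfiber⟩ := exists_fiber_card_eq_of_sum_eq_one _ _
    (fun A i => (P i).paddedShare n k N A) (fun A i => by unfold paddedShare; positivity) hrow
    (hP.sum_choose_mul_paddedShare hn hM)
  refine ⟨σ, fun i => ⟨(hσ i).1, Nat.pos_of_ne_zero fun h0 => ?_⟩, hfiber⟩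
  simpa [paddedShare, h0] using (hσ i).2

theorem IsBaranyaiFamily.sum_paddedCount_insertInto (hP : IsBaranyaiFamily n k N P)
    (hM : #M < n) {x : V} (hx : x ∉ M) {σ : ι → Finset V}
    (hσ : ∀ i, σ i ∈ {A ∈ M.powerset | #A < k} ∧ 0 < (P i).paddedCount N (σ i))
    (hfiber : ∀ A ∈ {A ∈ M.powerset | #A < k},
      #{i | σ i = A} = (n - #M - 1).choose (k - 1 - #A))
    {B : Finset V} (hB : B ⊆ insert x M) (hBk : #B ≤ k) :
    ∑ i, ((P i).insertInto hx (eq_empty_or_mem_parts_of_paddedCount_pos (hσ i).2)).paddedCount N B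
      = (n - #(insert x M)).choose (k - #B) := by
  simp only [paddedCount_insertInto, card_insert_of_notMem hx]
  by_cases hxB : x ∈ B
  · have hB0 := card_pos.2 ⟨x, hxB⟩
    have hBx : B.erase x ∈ {A ∈ M.powerset | #A < k} := by
      refine mem_filter.2 ⟨mem_powerset.2 fun y hy => ?_, ?_⟩
      · exact (mem_insert.1 (hB (mem_of_mem_erase hy))).resolve_left (ne_of_mem_erase hy)
      · rw [card_erase_of_mem hxB]; omega
    simp only [hxB, if_true, sum_boole, Nat.cast_id, hfiber _ hBx, card_erase_of_mem hxB]
    congr 1; omega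
  have hBM : B ⊆ M := fun y hy =>
    (mem_insert.1 (hB hy)).resolve_left (ne_of_mem_of_not_mem hy hxB)
  simp only [hxB, if_false]
  rw [sum_tsub_distrib _ fun i _ => ?_, hP.sum_paddedCount B hBM hBk, sum_boole, Nat.cast_id]
  · rcases hBk.lt_or_eq with hlt | heq
    · rw [hfiber B (mem_filter.2 ⟨mem_powerset.2 hBM, hlt⟩)]
      obtain ⟨q, hq⟩ : ∃ q, k - #B = q + 1 := ⟨k - #B - 1, by omega⟩
      obtain ⟨c, hc⟩ : ∃ c, n - #M = c + 1 := ⟨n - #M - 1, by omega⟩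
      rw [show n - #M - 1 = c by omega, show n - (#M + 1) = c by omega, hc, hq,
        show k - 1 - #B = q by omega, Nat.choose_succ_succ', Nat.add_sub_cancel_left]
    · have hempty : ({i | σ i = B} : Finset ι) = ∅ :=
        filter_eq_empty_iff.2 fun i _ h => by
          have := (mem_filter.1 (hσ i).1).2; rw [h] at this; omega
      rw [hempty, card_empty, heq, Nat.sub_self, Nat.choose_zero_right, Nat.choose_zero_right]
  · split_ifs with h
    · exact h ▸ (hσ i).2
    · exact Nat.zero_le _

theorem IsBaranyaiFamily.insertInto (hP : IsBaranyaiFamily n k N P) (hM : #M < n) {x : V}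
    (hx : x ∉ M) {σ : ι → Finset V}
    (hσ : ∀ i, σ i ∈ {A ∈ M.powerset | #A < k} ∧ 0 < (P i).paddedCount N (σ i))
    (hfiber : ∀ A ∈ {A ∈ M.powerset | #A < k},
      #{i | σ i = A} = (n - #M - 1).choose (k - 1 - #A)) :
    IsBaranyaiFamily n k N fun i =>
      (P i).insertInto hx (eq_empty_or_mem_parts_of_paddedCount_pos (hσ i).2) where
  card_parts_le i := by
    rw [card_parts_insertInto]
    have hpos := (hσ i).2
    split_ifs with h0
    · simp only [paddedCount, h0, (P i).empty_notMem_parts, if_false, if_true] at hpos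
      omega
    · simpa using hP.card_parts_le i
  card_le_of_mem_parts i B hB := by
    rcases mem_insert.1 hB with rfl | hB
    · have := (mem_filter.1 (hσ i).1).2
      have := card_insert_le x (σ i)
      omega
    · exact hP.card_le_of_mem_parts i B (mem_of_mem_erase hB)
  sum_paddedCount _ hB hBk := hP.sum_paddedCount_insertInto hM hx hσ hfiber hB hBk

theorem IsBaranyaiFamily.exists_insert (hP : IsBaranyaiFamily n k N P)
    (hn : n = k * N) (hM : #M < n) {x : V} (hx : x ∉ M) :
    ∃ P' : ι → Finpartition (insert x M), IsBaranyaiFamily n k N P' := by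
  obtain ⟨σ, hσ, hfiber⟩ := hP.exists_targets hn hM
  exact ⟨_, hP.insertInto hM hx hσ hfiber⟩

theorem exists_isBaranyaiFamily (hn : n = k * N) (hι : Fintype.card ι * N = n.choose k)
    (M : Finset V) (hM : #M ≤ n) : ∃ P : ι → Finpartition M, IsBaranyaiFamily n k N P := by
  induction M using Finset.induction_on with
  | empty => exact ⟨_, isBaranyaiFamily_empty hι⟩
  | insert x M hx ih =>
    rw [card_insert_of_notMem hx] at hM
    obtain ⟨P, hP⟩ := ih (by omega)
    exact hP.exists_insert hn (by omega) hx

theorem IsBaranyaiFamily.card_eq_of_mem_parts (hP : IsBaranyaiFamily n k N P) (hM : #M = n)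
    {i : ι} {A : Finset V} (hA : A ∈ (P i).parts) : #A = k := by
  have hAk := hP.card_le_of_mem_parts i A hA
  have hsum := hP.sum_paddedCount A ((P i).subset hA) hAk
  rw [hM, Nat.sub_self] at hsum
  have hpos : 0 < (P i).paddedCount N A := by simp [paddedCount, hA]
  have : 0 < (0 : ℕ).choose (k - #A) :=
    hsum ▸ hpos.trans_le (single_le_sum (f := fun j => (P j).paddedCount N A)
      (fun j _ => Nat.zero_le _) (mem_univ i))
  have := (Nat.choose_eq_zero_iff).not.1 this.ne'
  omega

theorem IsBaranyaiFamily.existsUnique_mem_parts (hP : IsBaranyaiFamily n k N P) (hM : #M = n)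
    (hk : 0 < k) {A : Finset V} (hA : A ⊆ M) (hAk : #A = k) : ∃! i, A ∈ (P i).parts := by
  have hsum := hP.sum_paddedCount A hA hAk.le
  have hA0 : A ≠ ∅ := by rintro rfl; simp at hAk; omega
  simp only [paddedCount, hA0, if_false, add_zero, sum_boole, Nat.cast_id, hM, hAk,
    Nat.sub_self, Nat.choose_zero_right] at hsum
  obtain ⟨i, hi⟩ := card_eq_one.1 hsum
  have hmem : ∀ j, A ∈ (P j).parts ↔ j = i := fun j => by
    rw [← mem_singleton, ← hi, mem_filter, and_iff_right (mem_univ j)]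
  exact ⟨i, (hmem i).2 rfl, fun j => (hmem j).1⟩

theorem IsBaranyaiFamily.card_parts_eq (hP : IsBaranyaiFamily n k N P) (hM : #M = n)
    (hk : 0 < k) (i : ι) : #(P i).parts = N := by
  have hsum := hP.sum_paddedCount ∅ (empty_subset M) (Nat.zero_le k)
  rw [hM, Nat.sub_self, card_empty, Nat.sub_zero, Nat.choose_eq_zero_of_lt hk,
    sum_eq_zero_iff] at hsum
  have := hsum i (mem_univ i)
  have := hP.card_parts_le i
  simp only [paddedCount, (P i).empty_notMem_parts, if_false, if_true, zero_add] at *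
  omega

end Baranyai

/-- Baranyai-type partition: if `k ∣ n` (`k > 0`), the `binom(n,k)` `k`-element subsets
of an `n`-element set can be partitioned into `binom(n,k)/(n/k)` families, each family
being a partition of the `n`-element set into `n/k` pairwise disjoint `k`-element
subsets; each `k`-subset belongs to exactly one family. -/
theorem baranyai_partition {V : Type*} [Fintype V] [DecidableEq V] (n k : ℕ)
    (hn : Fintype.card V = n) (hk : k ∣ n) (hk0 : 0 < k) :
    ∃ f : {S : Finset V // S.card = k} → Fin (n.choose k / (n / k)),
      ∀ i : Fin (n.choose k / (n / k)),
        (∀ S T : {S : Finset V // S.card = k},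
            f S = i → f T = i → S ≠ T → Disjoint S.1 T.1) ∧
        (∀ v : V, ∃ S : {S : Finset V // S.card = k}, f S = i ∧ v ∈ S.1) ∧
        Nat.card {S : {S : Finset V // S.card = k} // f S = i} = n / k := by
  have hnN : n = k * (n / k) := (Nat.mul_div_cancel' hk).symm
  have hι : Fintype.card (Fin (n.choose k / (n / k))) * (n / k) = n.choose k := by
    rw [Fintype.card_fin, Nat.div_mul_cancel (Nat.div_dvd_choose hk0 hk)]
  have hM : #(univ : Finset V) = n := by rw [card_univ, hn]
  obtain ⟨P, hP⟩ := exists_isBaranyaiFamily hnN hι univ hM.le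
  choose f hf hf_unique using fun S : {S : Finset V // #S = k} =>
    hP.existsUnique_mem_parts hM hk0 (subset_univ S.1) S.2
  refine ⟨f, fun i => ⟨?_, fun v => ?_, ?_⟩⟩
  · rintro S T rfl hT hST
    exact (P (f S)).disjoint (hf S) (hT ▸ hf T) (Subtype.coe_ne_coe.2 hST)
  · obtain ⟨A, hA, hvA⟩ := (P i).exists_mem (mem_univ v)
    exact ⟨⟨A, hP.card_eq_of_mem_parts hM hA⟩, (hf_unique _ i hA).symm, hvA⟩
  · refine (Nat.card_congr (β := (P i).parts)
      { toFun := fun S => ⟨S.1.1, by simpa [S.2] using hf S.1⟩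
        invFun := fun A => ⟨⟨A.1, hP.card_eq_of_mem_parts hM A.2⟩, (hf_unique _ i A.2).symm⟩
        left_inv := fun _ => rfl
        right_inv := fun _ => rfl }).trans ?_
    rw [Nat.card_eq_finsetCard, hP.card_parts_eq hM hk0 i]
end

section
/- For k ≤ √(2 log₂ n) and n sufficiently large, the inequality α < (n/k)·p holds, where p = 2^{-k(k-1)/2} and α = (binom(k,2) + 2 log₂ binom(k,2) + δ(n) + log₂(binom(n,k)/(n/k)) + O(1))·3/log₂ e, provided δ(n) < 2^{√((1/2) log₂ n)}/(4 log₂ n); consequently binom(n,k)·√(α(k/n)p) < binom(n,k)·p. -/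
/-!
Write `L = log₂ n` and `s = √(L / 2)`, so that `L = 2 s²` and `k ≤ 2 s`. Since
`k (k - 1) / 2 ≤ L - s`, the right-hand side `(n / k) p` is at least `2 ^ s / (2 s)`. Every term of
the numerator of `α` is at most polynomial in `s`: `binom(k, 2) ≤ L`, `log₂ binom(k, 2) ≤ L`,
`log₂ (binom(n, k) / (n / k)) ≤ k L ≤ 4 s³`, and `d < 2 ^ s / (8 s²)`. The exponential `2 ^ s` beats
these once `s` is large. The second inequality is the first one multiplied by `(k / n) p`, under a
square root.
-/

open Real Filter Asymptotics

lemma logb_two_natCast_le_self (m : ℕ) : logb 2 m ≤ m := by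
  rcases m.eq_zero_or_pos with rfl | hm
  · simp
  · rw [logb_le_iff_le_rpow one_lt_two (by exact_mod_cast hm), rpow_natCast]
    exact_mod_cast m.lt_two_pow_self.le

lemma cast_choose_two_le_of_le_sqrt {k : ℕ} {x : ℝ} (hx : 0 ≤ x) (hk : (k : ℝ) ≤ √(2 * x)) :
    (k.choose 2 : ℝ) ≤ x := by
  have hk2 : (k : ℝ) ^ 2 ≤ 2 * x := (le_sqrt k.cast_nonneg (by positivity)).1 hk
  rw [Nat.cast_choose_two]
  nlinarith [k.cast_nonneg (α := ℝ)]

lemma logb_choose_div_le {n k : ℕ} (hk : 0 < k) (hkn : k ≤ n) :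
    logb 2 ((n.choose k : ℝ) / ((n : ℝ) / k)) ≤ k * logb 2 n := by
  have hC : (0 : ℝ) < n.choose k := by exact_mod_cast Nat.choose_pos hkn
  have hnk : (1 : ℝ) ≤ (n : ℝ) / k := by
    rw [one_le_div (by positivity)]; exact_mod_cast hkn
  calc logb 2 ((n.choose k : ℝ) / ((n : ℝ) / k)) ≤ logb 2 ((n : ℝ) ^ k) :=
        logb_le_logb_of_le one_lt_two (by positivity) <|
          (div_le_self hC.le hnk).trans (by exact_mod_cast n.choose_le_pow k)
    _ = k * logb 2 n := logb_pow 2 n k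

lemma sqrt_two_mul_eq_two_mul_sqrt_half (x : ℝ) : √(2 * x) = 2 * √((1 / 2) * x) := by
  rw [show 2 * x = 2 ^ 2 * ((1 / 2) * x) by ring, sqrt_mul (by positivity), sqrt_sq zero_le_two]

lemma sqrt_half_le_sub_choose {x k : ℝ} (hx : 0 ≤ x) (hk1 : 1 ≤ k) (hk : k ≤ √(2 * x)) :
    √((1 / 2) * x) ≤ x - k * (k - 1) / 2 := by
  set s := √((1 / 2) * x)
  have hs2 : s ^ 2 = (1 / 2) * x := sq_sqrt (by positivity)
  have hks : k ≤ 2 * s := by rwa [sqrt_two_mul_eq_two_mul_sqrt_half] at hk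
  nlinarith [mul_nonneg (sub_nonneg.2 hks) (show 0 ≤ 2 * s + k - 1 by linarith)]

lemma two_rpow_sqrt_half_logb_le {n k : ℝ} (hn : 1 ≤ n) (hk1 : 1 ≤ k)
    (hk : k ≤ √(2 * logb 2 n)) :
    (2 : ℝ) ^ √((1 / 2) * logb 2 n) ≤ n * 2 ^ (-(k * (k - 1) / 2)) := by
  have hL : 0 ≤ logb 2 n := logb_nonneg one_lt_two hn
  calc (2 : ℝ) ^ √((1 / 2) * logb 2 n) ≤ 2 ^ (logb 2 n + -(k * (k - 1) / 2)) :=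
        rpow_le_rpow_of_exponent_le one_le_two (by linarith [sqrt_half_le_sub_choose hL hk1 hk])
    _ = n * 2 ^ (-(k * (k - 1) / 2)) := by
        rw [rpow_add two_pos, rpow_logb two_pos (by norm_num) (by linarith)]

lemma eventually_mul_pow_le_two_rpow (C : ℝ) (m : ℕ) :
    ∀ᶠ s : ℝ in atTop, C * s ^ m ≤ 2 ^ s := by
  filter_upwards [((isLittleO_pow_exp_pos_mul_atTop m (log_pos one_lt_two)).const_mul_left
    C).bound one_pos] with s hs
  rw [rpow_def_of_pos two_pos]
  simpa [abs_of_pos (exp_pos _)] using (le_abs_self _).trans hs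

-- `6 s² + 4 s³` bounds `(3 + k) L` and `8 s²` is `4 L`, for `L = 2 s²` and `k ≤ 2 s`.
lemma eventually_three_mul_lt_two_rpow_div (c : ℝ) :
    ∀ᶠ s : ℝ in atTop, ∀ d, d < 2 ^ s / (8 * s ^ 2) →
      3 * (6 * s ^ 2 + 4 * s ^ 3 + d + c) < 2 ^ s / (2 * s) := by
  filter_upwards [eventually_ge_atTop 3, eventually_ge_atTop |c|,
    eventually_mul_pow_le_two_rpow 88 4] with s hs3 hsc hgrowth d hd
  have hs : 0 < s := by linarith
  rw [lt_div_iff₀ (by positivity)] at hd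
  rw [lt_div_iff₀ (by positivity)]
  have hd' : 24 * s * d < 2 ^ s := by
    rcases le_or_gt d 0 with h | h
    · nlinarith [rpow_pos_of_pos two_pos s]
    · nlinarith [mul_nonneg (mul_nonneg hs.le h.le) (sub_nonneg.2 hs3)]
  have hsc' : s * c ≤ s * s := by nlinarith [le_abs_self c]
  have hs34 : s ^ 3 ≤ s ^ 4 := pow_le_pow_right₀ (by linarith) (by norm_num)
  have hs24 : s * s ≤ s ^ 4 := by nlinarith
  nlinarith

lemma div_logb_two_exp_lt {a b x : ℝ} (hab : a ≤ b) (hbx : b < x) (hx : 0 < x) :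
    a / logb 2 (exp 1) < x := by
  have hlog : log 2 < 1 := by linarith [log_two_lt_d9]
  rw [logb, log_exp, div_div_eq_mul_div, div_one]
  rcases le_or_gt a 0 with ha | ha
  · nlinarith [log_pos one_lt_two]
  · nlinarith

lemma sqrt_mul_div_mul_lt {x a b p : ℝ} (ha : 0 < a) (hb : 0 < b) (hp : 0 < p)
    (h : x < a / b * p) : √(x * (b / a) * p) < p := by
  rw [sqrt_lt' hp]
  calc x * (b / a) * p < a / b * p * (b / a) * p := by gcongr
    _ = p ^ 2 := by field_simp

lemma choose_add_logb_le {n k : ℕ} (hk : 0 < k) (hkn : k ≤ n)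
    (hkL : (k : ℝ) ≤ √(2 * logb 2 n)) :
    (k.choose 2 : ℝ) + 2 * logb 2 (k.choose 2) + logb 2 ((n.choose k : ℝ) / ((n : ℝ) / k))
      ≤ (3 + k) * logb 2 n := by
  have hL : 0 ≤ logb 2 n := logb_nonneg one_lt_two (by exact_mod_cast hk.trans_le hkn)
  have hchoose := cast_choose_two_le_of_le_sqrt hL hkL
  linarith [logb_two_natCast_le_self (k.choose 2), logb_choose_div_le hk hkn]

lemma tendsto_sqrt_half_logb_atTop :
    Tendsto (fun n : ℕ => √((1 / 2) * logb 2 n)) atTop atTop :=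
  tendsto_sqrt_atTop.comp <| ((tendsto_logb_atTop one_lt_two).const_mul_atTop
    (by norm_num)).comp tendsto_natCast_atTop_atTop

/-- Arithmetic core of the all-subgraphs theorem: for any constant `c` (the `O(1)` term)
and all sufficiently large `n`, for every `k ∣ n` with `1 ≤ k ≤ √(2 log₂ n)` and every
deficiency value `0 ≤ d < 2^{√((1/2) log₂ n)}/(4 log₂ n)`, setting
`p = 2^{-k(k-1)/2}` and
`α = (binom(k,2) + 2 log₂ binom(k,2) + d + log₂(binom(n,k)/(n/k)) + c)·3/log₂ e`,
one has `α < (n/k)·p`, and consequently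
`binom(n,k)·√(α(k/n)p) < binom(n,k)·p`. -/
theorem all_subgraphs_arithmetic (c : ℝ) :
    ∃ N : ℕ, ∀ n : ℕ, N ≤ n → ∀ k : ℕ, k ∣ n → 1 ≤ k →
      (k : ℝ) ≤ Real.sqrt (2 * Real.logb 2 n) →
      ∀ d : ℝ, 0 ≤ d →
        d < (2 : ℝ) ^ (Real.sqrt ((1 / 2) * Real.logb 2 n)) / (4 * Real.logb 2 n) →
        ((k.choose 2 : ℝ) + 2 * Real.logb 2 (k.choose 2) + d +
              Real.logb 2 ((n.choose k : ℝ) / ((n : ℝ) / k)) + c) * 3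
            / Real.logb 2 (Real.exp 1)
          < ((n : ℝ) / k) * (2 : ℝ) ^ (-((k : ℝ) * ((k : ℝ) - 1) / 2)) ∧
        (n.choose k : ℝ) *
            Real.sqrt
              ((((k.choose 2 : ℝ) + 2 * Real.logb 2 (k.choose 2) + d +
                    Real.logb 2 ((n.choose k : ℝ) / ((n : ℝ) / k)) + c) * 3
                  / Real.logb 2 (Real.exp 1)) *
                ((k : ℝ) / n) * (2 : ℝ) ^ (-((k : ℝ) * ((k : ℝ) - 1) / 2)))
          < (n.choose k : ℝ) * (2 : ℝ) ^ (-((k : ℝ) * ((k : ℝ) - 1) / 2)) := by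
  obtain ⟨N, hN⟩ := eventually_atTop.1 <|
    (tendsto_sqrt_half_logb_atTop.eventually (eventually_three_mul_lt_two_rpow_div c)).and
      (eventually_ge_atTop 1)
  refine ⟨N, fun n hn k hdvd hk hkL d _ hd => ?_⟩
  obtain ⟨hpoly_lt, hn1⟩ := hN n hn
  set s := √((1 / 2) * logb 2 n)
  have hkn : k ≤ n := Nat.le_of_dvd hn1 hdvd
  have hk0 : (0 : ℝ) < k := by exact_mod_cast hk
  have hks : (k : ℝ) ≤ 2 * s := by rwa [sqrt_two_mul_eq_two_mul_sqrt_half] at hkL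
  have hlogb : logb 2 n = 2 * s ^ 2 := by
    rw [sq_sqrt (by positivity [logb_nonneg one_lt_two (Nat.one_le_cast.2 hn1)])]; ring
  have hp : 2 ^ s / (2 * s) ≤ (n : ℝ) / k * 2 ^ (-((k : ℝ) * ((k : ℝ) - 1) / 2)) := by
    rw [div_mul_eq_mul_div]
    exact div_le_div₀ (by positivity) (two_rpow_sqrt_half_logb_le (by exact_mod_cast hn1)
      (by exact_mod_cast hk) hkL) hk0 hks
  have hnum := choose_add_logb_le hk hkn hkL
  have hnum_le : (3 + k) * logb 2 n ≤ 6 * s ^ 2 + 4 * s ^ 3 := by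
    rw [hlogb]; nlinarith [sq_nonneg s]
  have hd' : d < 2 ^ s / (8 * s ^ 2) := by convert hd using 2; rw [hlogb]; ring
  refine ⟨?hα, mul_lt_mul_of_pos_left (sqrt_mul_div_mul_lt (by positivity) hk0 (by positivity) ?hα)
    (by exact_mod_cast Nat.choose_pos hkn)⟩
  exact div_logb_two_exp_lt (by linarith) ((hpoly_lt d hd').trans_le hp) (by positivity)
end
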